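/- arXiv:2510.23765 — 6 statements merged into one kernel-verified Lean document; each statement's English description precedes it below -/
import Mathlib

section
/- Let m, n ≥ 1, let ā, â ∈ ℝ^m have nonnegative entries, let Ω > 0, V > 0, let c ∈ ℝ^n have nonnegative entries, and let U_Ω = {a ∈ ℝ^m : 0 ≤ a_i ≤ â_i for all i, Σ_{i∈[m]} a_i ≤ Ω}. Let z* ∈ {0,1}^{m×n} satisfy Σ_{j∈[n]} z*_{ij} = 1 for every i ∈ [m], and let y* ∈ {0,1}^n satisfy z*_{ij} ≤ y*_j for all i, j. Define, for each j ∈ [n], γ_j = c_j·(Σ_{i : z*_{ij}=1} ā_i − V·y*_j) and u_j = Σ_{i : z*_{ij}=1} â_i. Then sup_{a∈U_Ω} Σ_{j∈[n]} c_j·max(Σ_{i∈[m]} z*_{ij}(ā_i + a_i) − V·y*_j, 0) = max { Σ_{j∈[n]} max(γ_j + c_j·x_j, 0) : x ∈ ℝ^n, Σ_{j∈[n]} x_j ≤ Ω, 0 ≤ x_j ≤ u_j for all j }. -/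
/-- Observation 1: for a binary master solution, the separation problem is a
two-piece convex knapsack problem with `γ_j`, slopes `c_j`, and capacities `u_j`. -/
theorem stmt_1 (m n : ℕ) (hm : 1 ≤ m) (hn : 1 ≤ n)
    (abar ahat : Fin m → ℝ) (habar : ∀ i, 0 ≤ abar i) (hahat : ∀ i, 0 ≤ ahat i)
    (Ω V : ℝ) (hΩ : 0 < Ω) (hV : 0 < V)
    (c : Fin n → ℝ) (hc : ∀ j, 0 ≤ c j)
    (U : Set (Fin m → ℝ))
    (hU : U = {a | (∀ i, 0 ≤ a i ∧ a i ≤ ahat i) ∧ ∑ i, a i ≤ Ω})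
    (zstar : Fin m → Fin n → ℝ) (hzbin : ∀ i j, zstar i j = 0 ∨ zstar i j = 1)
    (hzsum : ∀ i, ∑ j, zstar i j = 1)
    (ystar : Fin n → ℝ) (hybin : ∀ j, ystar j = 0 ∨ ystar j = 1)
    (hzy : ∀ i j, zstar i j ≤ ystar j)
    (γ uu : Fin n → ℝ)
    (hγ : ∀ j, γ j = c j *
      ((∑ i ∈ Finset.univ.filter (fun i : Fin m => zstar i j = 1), abar i) - V * ystar j))
    (huu : ∀ j, uu j = ∑ i ∈ Finset.univ.filter (fun i : Fin m => zstar i j = 1), ahat i) :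
    IsGreatest
      ((fun x : Fin n → ℝ => ∑ j, max (γ j + c j * x j) 0) ''
        {x | (∑ j, x j ≤ Ω) ∧ ∀ j, 0 ≤ x j ∧ x j ≤ uu j})
      (sSup ((fun a => ∑ j, c j *
        max (∑ i, zstar i j * (abar i + a i) - V * ystar j) 0) '' U)) := by
  -- abbreviations
  have zsum_eq : ∀ (j : Fin n) (t : Fin m → ℝ),
      ∑ i, zstar i j * t i
        = ∑ i ∈ Finset.univ.filter (fun i : Fin m => zstar i j = 1), t i := by
    intro j t
    rw [Finset.sum_filter]
    refine Finset.sum_congr rfl fun i _ => ?_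
    rcases hzbin i j with h | h <;> simp [h]
  have fiber_sum : ∀ (a : Fin m → ℝ),
      ∑ j, (∑ i ∈ Finset.univ.filter (fun i : Fin m => zstar i j = 1), a i)
        = ∑ i, a i := by
    intro a
    have : ∀ j, (∑ i ∈ Finset.univ.filter (fun i : Fin m => zstar i j = 1), a i)
        = ∑ i, zstar i j * a i := fun j => (zsum_eq j a).symm
    simp_rw [this]
    rw [Finset.sum_comm]
    refine Finset.sum_congr rfl fun i _ => ?_
    rw [← Finset.sum_mul, hzsum i, one_mul]
  -- value equality per coordinate
  have value_eq : ∀ (a : Fin m → ℝ) (x : Fin n → ℝ),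
      (∀ j, x j = ∑ i ∈ Finset.univ.filter (fun i : Fin m => zstar i j = 1), a i) →
      (∑ j, c j * max (∑ i, zstar i j * (abar i + a i) - V * ystar j) 0)
        = ∑ j, max (γ j + c j * x j) 0 := by
    intro a x hx
    refine Finset.sum_congr rfl fun j _ => ?_
    have h1 : ∑ i, zstar i j * (abar i + a i)
        = (∑ i ∈ Finset.univ.filter (fun i : Fin m => zstar i j = 1), abar i) + x j := by
      rw [zsum_eq j (fun i => abar i + a i), Finset.sum_add_distrib, hx j]
    rw [h1, mul_max_of_nonneg _ _ (hc j), mul_zero, hγ j]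
    ring_nf
  -- the two images coincide
  have himg : ((fun a => ∑ j, c j *
        max (∑ i, zstar i j * (abar i + a i) - V * ystar j) 0) '' U)
      = ((fun x : Fin n → ℝ => ∑ j, max (γ j + c j * x j) 0) ''
        {x | (∑ j, x j ≤ Ω) ∧ ∀ j, 0 ≤ x j ∧ x j ≤ uu j}) := by
    apply Set.Subset.antisymm
    · rintro v ⟨a, ha, rfl⟩
      rw [hU] at ha
      obtain ⟨hab, hasum⟩ := ha
      set x : Fin n → ℝ :=
        fun j => ∑ i ∈ Finset.univ.filter (fun i : Fin m => zstar i j = 1), a i with hxdef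
      refine ⟨x, ⟨?_, fun j => ⟨?_, ?_⟩⟩, (value_eq a x fun j => rfl).symm⟩
      · rw [hxdef]; simpa [fiber_sum a] using hasum
      · exact Finset.sum_nonneg fun i _ => (hab i).1
      · rw [huu j]
        exact Finset.sum_le_sum fun i _ => (hab i).2
    · rintro v ⟨x, ⟨hxsum, hxb⟩, rfl⟩
      -- build a from x
      have hex : ∀ i, ∃ j, zstar i j = 1 := by
        intro i
        by_contra h
        push_neg at h
        have : ∑ j, zstar i j = 0 := by
          refine Finset.sum_eq_zero fun j _ => ?_
          rcases hzbin i j with h0 | h1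
          · exact h0
          · exact absurd h1 (h j)
        rw [hzsum i] at this; norm_num at this
      choose jj hjj using hex
      have huniq : ∀ i j, zstar i j = 1 → jj i = j := by
        intro i j h
        by_contra hne
        have hge : (2 : ℝ) ≤ ∑ j', zstar i j' := by
          have hsub : ({jj i, j} : Finset (Fin n)) ⊆ Finset.univ := Finset.subset_univ _
          have h2 : ∑ j' ∈ ({jj i, j} : Finset (Fin n)), zstar i j' = 2 := by
            rw [Finset.sum_pair hne, hjj i, h]; norm_num
          calc (2:ℝ) = ∑ j' ∈ ({jj i, j} : Finset (Fin n)), zstar i j' := h2.symm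
            _ ≤ ∑ j', zstar i j' := Finset.sum_le_sum_of_subset_of_nonneg hsub
                (fun j' _ _ => by rcases hzbin i j' with h | h <;> simp [h])
        rw [hzsum i] at hge; norm_num at hge
      set a : Fin m → ℝ := fun i =>
        if uu (jj i) = 0 then 0 else ahat i * (x (jj i) / uu (jj i)) with hadef
      have huu_nonneg : ∀ j, 0 ≤ uu j := fun j => by
        rw [huu j]; exact Finset.sum_nonneg fun i _ => hahat i
      have hratio : ∀ j, uu j ≠ 0 → 0 ≤ x j / uu j ∧ x j / uu j ≤ 1 := by
        intro j hne
        have hpos : 0 < uu j := lt_of_le_of_ne (huu_nonneg j) (Ne.symm hne)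
        constructor
        · exact div_nonneg (hxb j).1 hpos.le
        · rw [div_le_one hpos]; exact (hxb j).2
      have habnd : ∀ i, 0 ≤ a i ∧ a i ≤ ahat i := by
        intro i
        rw [hadef]
        by_cases h : uu (jj i) = 0
        · simp [h, hahat i]
        · simp only [h, if_false]
          obtain ⟨hr0, hr1⟩ := hratio _ h
          exact ⟨mul_nonneg (hahat i) hr0,
            (mul_le_of_le_one_right (hahat i) hr1)⟩
      have hfib : ∀ j, ∑ i ∈ Finset.univ.filter (fun i : Fin m => zstar i j = 1), a i
          = x j := by
        intro j
        have hmem : ∀ i ∈ Finset.univ.filter (fun i : Fin m => zstar i j = 1),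
            a i = if uu j = 0 then 0 else ahat i * (x j / uu j) := by
          intro i hi
          rw [Finset.mem_filter] at hi
          rw [hadef]
          simp only
          rw [huniq i j hi.2]
        rw [Finset.sum_congr rfl hmem]
        by_cases h : uu j = 0
        · simp only [h, if_true, Finset.sum_const_zero]
          have := (hxb j).2
          rw [h] at this
          linarith [(hxb j).1]
        · simp only [h, if_false, ← Finset.sum_mul, ← huu j]
          field_simp
      have hamem : a ∈ U := by
        rw [hU]
        refine ⟨habnd, ?_⟩
        rw [← fiber_sum a]
        calc ∑ j, (∑ i ∈ Finset.univ.filter (fun i : Fin m => zstar i j = 1), a i)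
            = ∑ j, x j := Finset.sum_congr rfl fun j _ => hfib j
          _ ≤ Ω := hxsum
      exact ⟨a, hamem, value_eq a x fun j => (hfib j).symm⟩
  rw [himg]
  -- now show IsGreatest B (sSup B) via compactness
  set S : Set (Fin n → ℝ) := {x | (∑ j, x j ≤ Ω) ∧ ∀ j, 0 ≤ x j ∧ x j ≤ uu j} with hSdef
  have huu_nonneg : ∀ j, 0 ≤ uu j := fun j => by
    rw [huu j]; exact Finset.sum_nonneg fun i _ => hahat i
  have hS0 : (0 : Fin n → ℝ) ∈ S := by
    constructor
    · simpa using hΩ.le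
    · intro j; exact ⟨le_rfl, huu_nonneg j⟩
  have hSeq : S = {x : Fin n → ℝ | ∑ j, x j ≤ Ω} ∩ Set.Icc (0 : Fin n → ℝ) uu := by
    ext x
    simp only [hSdef, Set.mem_setOf_eq, Set.mem_inter_iff, Set.mem_Icc, Pi.le_def]
    constructor
    · rintro ⟨h1, h2⟩; exact ⟨h1, fun j => by simpa using (h2 j).1, fun j => (h2 j).2⟩
    · rintro ⟨h1, h2, h3⟩; exact ⟨h1, fun j => ⟨by simpa using h2 j, h3 j⟩⟩
  have hScompact : IsCompact S := by
    have hsub : S ⊆ Set.Icc (0 : Fin n → ℝ) uu := by rw [hSeq]; exact Set.inter_subset_right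
    have hclosed : IsClosed S := by
      rw [hSeq]
      exact (isClosed_le (continuous_finset_sum _ fun j _ => continuous_apply j)
        continuous_const).inter isClosed_Icc
    exact (isCompact_Icc).of_isClosed_subset hclosed hsub
  have hcont : Continuous (fun x : Fin n → ℝ => ∑ j, max (γ j + c j * x j) 0) := by
    refine continuous_finset_sum _ fun j _ => ?_
    exact (continuous_const.add (continuous_const.mul (continuous_apply j))).max
      continuous_const
  have hKcompact : IsCompact ((fun x : Fin n → ℝ => ∑ j, max (γ j + c j * x j) 0) '' S) :=
    hScompact.image hcont
  have hKne : ((fun x : Fin n → ℝ => ∑ j, max (γ j + c j * x j) 0) '' S).Nonempty :=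
    ⟨_, Set.mem_image_of_mem _ hS0⟩
  exact ⟨hKcompact.sSup_mem hKne, fun v hv => le_csSup hKcompact.bddAbove hv⟩
end

section
/- Let m, n ≥ 1, let ā, â ∈ ℝ^m have nonnegative entries, let 0 < Ω ≤ Σ_{i∈[m]} â_i, let V > 0 and c ≥ 0, and let U_Ω = {a ∈ ℝ^m : 0 ≤ a_i ≤ â_i for all i, Σ_{i∈[m]} a_i ≤ Ω}. Let B_1, …, B_n be pairwise disjoint subsets of [m] whose union is [m], and suppose at most k of the sets B_1, …, B_n are nonempty, where 1 ≤ k ≤ n. Then sup_{a∈U_Ω} Σ_{j∈[n]} c·max(Σ_{i∈B_j}(ā_i + a_i) − V, 0) ≥ c·(Σ_{i∈[m]} ā_i + Ω − k·V). -/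
/-!
Spread the budget proportionally, `a = (Ω / Σ â) • â`: this point of `U_Ω` uses the whole
budget `Ω`. For it, the bins are a partition of the items, so their loads add up to
`Σ ā + Ω`, and the empty bins carry no load. Bounding each of the at most `k` nonempty
bins' overtime `max (load - V) 0` from below by `load - V` gives the inequality at this
point, hence for the supremum.
-/

open Finset Function

section Overtime

variable {ι α : Type*} [Fintype ι]

def totalOvertime (B : ι → Finset α) (V c : ℝ) (load : α → ℝ) : ℝ :=
  ∑ j, c * max (∑ i ∈ B j, load i - V) 0

theorem totalOvertime_mono {B : ι → Finset α} {V c : ℝ} (hc : 0 ≤ c) :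
    Monotone (totalOvertime B V c) := by
  intro x y hxy
  unfold totalOvertime
  gcongr with j _ i _
  exact hxy i

theorem sum_sum_eq_sum_of_partition {β : Type*} [AddCommMonoid β] [Fintype α]
    [DecidableEq α] {B : ι → Finset α} (hdisj : Pairwise (Disjoint on B))
    (hcover : ∀ i, ∃ j, i ∈ B j) (f : α → β) :
    ∑ j, ∑ i ∈ B j, f i = ∑ i, f i := by
  rw [← sum_biUnion fun j _ j' _ h => hdisj h]
  congr
  ext i
  simpa using hcover i

theorem le_totalOvertime [Fintype α] [DecidableEq α] {B : ι → Finset α}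
    (hdisj : Pairwise (Disjoint on B)) (hcover : ∀ i, ∃ j, i ∈ B j) {V c : ℝ}
    (hV : 0 ≤ V) (hc : 0 ≤ c) {k : ℕ} (hk : #{j | (B j).Nonempty} ≤ k) (load : α → ℝ) :
    c * (∑ i, load i - k * V) ≤ totalOvertime B V c load := by
  set F : Finset ι := {j | (B j).Nonempty}
  have hload : ∑ j ∈ F, ∑ i ∈ B j, load i = ∑ i, load i := by
    rw [sum_filter_of_ne fun j _ h => nonempty_of_sum_ne_zero h,
      sum_sum_eq_sum_of_partition hdisj hcover]
  calc c * (∑ i, load i - k * V)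
      ≤ c * (∑ i, load i - #F * V) := by gcongr
    _ = ∑ j ∈ F, c * (∑ i ∈ B j, load i - V) := by
        rw [← mul_sum, sum_sub_distrib, hload, sum_const, nsmul_eq_mul]
    _ ≤ ∑ j ∈ F, c * max (∑ i ∈ B j, load i - V) 0 := by
        gcongr
        exact le_max_left _ _
    _ ≤ totalOvertime B V c load :=
        sum_le_sum_of_subset_of_nonneg (filter_subset _ _) fun _ _ _ =>
          mul_nonneg hc (le_max_right _ _)

end Overtime

theorem exists_mem_box_sum_eq {α : Type*} [Fintype α] {ahat : α → ℝ}
    (hahat : ∀ i, 0 ≤ ahat i) {Ω : ℝ} (hΩ : 0 ≤ Ω) (hΩub : Ω ≤ ∑ i, ahat i) :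
    ∃ a : α → ℝ, (∀ i, 0 ≤ a i ∧ a i ≤ ahat i) ∧ ∑ i, a i = Ω := by
  set T := ∑ i, ahat i
  have hT : 0 ≤ T := hΩ.trans hΩub
  have hq1 : Ω / T ≤ 1 := div_le_one_of_le₀ hΩub hT
  refine ⟨fun i => Ω / T * ahat i, fun i => ⟨mul_nonneg (div_nonneg hΩ hT) (hahat i),
    mul_le_of_le_one_left (hahat i) hq1⟩, ?_⟩
  rw [← mul_sum]
  rcases hT.eq_or_lt with hT0 | hTpos
  · rw [← hT0] at hΩub ⊢
    simp [le_antisymm hΩub hΩ]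
  · exact div_mul_cancel₀ Ω hTpos.ne'

theorem stmt_2_general (m n : ℕ)
    (abar ahat : Fin m → ℝ) (hahat : ∀ i, 0 ≤ ahat i)
    (Ω V c : ℝ) (hΩ : 0 < Ω) (hΩub : Ω ≤ ∑ i, ahat i) (hV : 0 < V) (hc : 0 ≤ c)
    (U : Set (Fin m → ℝ))
    (hU : U = {a | (∀ i, 0 ≤ a i ∧ a i ≤ ahat i) ∧ ∑ i, a i ≤ Ω})
    (B : Fin n → Finset (Fin m))
    (hdisj : ∀ j k : Fin n, j ≠ k → Disjoint (B j) (B k))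
    (hcover : ∀ i : Fin m, ∃ j : Fin n, i ∈ B j)
    (k : ℕ)
    (hknonempty : (Finset.univ.filter (fun j : Fin n => (B j).Nonempty)).card ≤ k) :
    c * ((∑ i, abar i) + Ω - k * V) ≤
      sSup ((fun a => ∑ j, c * max ((∑ i ∈ B j, (abar i + a i)) - V) 0) '' U) := by
  subst hU
  obtain ⟨a, hbox, hsum⟩ := exists_mem_box_sum_eq hahat hΩ.le hΩub
  have hbdd : BddAbove ((fun a => totalOvertime B V c (abar + a)) ''
      {a | (∀ i, 0 ≤ a i ∧ a i ≤ ahat i) ∧ ∑ i, a i ≤ Ω}) :=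
    ((totalOvertime_mono hc).comp (monotone_id.const_add abar)).map_bddAbove
      ⟨ahat, fun _ hb i => (hb.1 i).2⟩
  calc c * ((∑ i, abar i) + Ω - k * V)
      = c * (∑ i, (abar + a) i - k * V) := by
        rw [← hsum, ← sum_add_distrib]
        rfl
    _ ≤ totalOvertime B V c (abar + a) := le_totalOvertime hdisj hcover hV.le hc hknonempty _
    _ ≤ _ := le_csSup hbdd ⟨a, ⟨hbox, hsum.le⟩, rfl⟩

/-- Validity of the overtime symmetry-breaking inequality: if at most `k` bins
are nonempty, the worst-case total overtime is at least
`c · (Σ ā_i + Ω − k·V)`. -/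
theorem stmt_2 (m n : ℕ) (hm : 1 ≤ m) (hn : 1 ≤ n)
    (abar ahat : Fin m → ℝ) (habar : ∀ i, 0 ≤ abar i) (hahat : ∀ i, 0 ≤ ahat i)
    (Ω V c : ℝ) (hΩ : 0 < Ω) (hΩub : Ω ≤ ∑ i, ahat i) (hV : 0 < V) (hc : 0 ≤ c)
    (U : Set (Fin m → ℝ))
    (hU : U = {a | (∀ i, 0 ≤ a i ∧ a i ≤ ahat i) ∧ ∑ i, a i ≤ Ω})
    (B : Fin n → Finset (Fin m))
    (hdisj : ∀ j k : Fin n, j ≠ k → Disjoint (B j) (B k))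
    (hcover : ∀ i : Fin m, ∃ j : Fin n, i ∈ B j)
    (k : ℕ) (hk1 : 1 ≤ k) (hkn : k ≤ n)
    (hknonempty : (Finset.univ.filter (fun j : Fin n => (B j).Nonempty)).card ≤ k) :
    c * ((∑ i, abar i) + Ω - k * V) ≤
      sSup ((fun a => ∑ j, c * max ((∑ i ∈ B j, (abar i + a i)) - V) 0) '' U) :=
  stmt_2_general m n abar ahat hahat Ω V c hΩ hΩub hV hc U hU B hdisj hcover k hknonempty
end

section
/- Let n ≥ 1, let w_1, …, w_n be positive reals and let M > 0. Then max { Σ_{j∈[n]} max(2·x_j − w_j, 0) : x ∈ ℝ^n, Σ_{j∈[n]} x_j ≤ M, 0 ≤ x_j ≤ w_j for all j } = M if and only if there exists S ⊆ [n] with Σ_{j∈S} w_j = M. (Moreover the maximum is always at most M.) -/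
/-- Combinatorial core of the NP-hardness proof (Theorem 2): the subset-sum
instance has a solution iff the associated two-piece convex knapsack instance
has optimal value exactly `M`; moreover the value is always at most `M`. -/
theorem stmt_7 (n : ℕ) (hn : 1 ≤ n) (w : Fin n → ℝ) (hw : ∀ j, 0 < w j)
    (M : ℝ) (hM : 0 < M) :
    (IsGreatest {P : ℝ | ∃ x : Fin n → ℝ, (∀ j, 0 ≤ x j ∧ x j ≤ w j) ∧
        (∑ j, x j ≤ M) ∧ P = ∑ j, max (2 * x j - w j) 0} M ↔
      ∃ S : Finset (Fin n), ∑ j ∈ S, w j = M) ∧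
    ∀ x : Fin n → ℝ, (∀ j, 0 ≤ x j ∧ x j ≤ w j) → (∑ j, x j ≤ M) →
      ∑ j, max (2 * x j - w j) 0 ≤ M := by
  have key : ∀ x : Fin n → ℝ, (∀ j, 0 ≤ x j ∧ x j ≤ w j) →
      ∀ j : Fin n, max (2 * x j - w j) 0 ≤ x j := by
    intro x hx j
    rcases hx j with ⟨h0, h1⟩
    exact max_le (by linarith) h0
  have bound : ∀ x : Fin n → ℝ, (∀ j, 0 ≤ x j ∧ x j ≤ w j) → (∑ j, x j ≤ M) →
      ∑ j, max (2 * x j - w j) 0 ≤ M := by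
    intro x hx hs
    calc ∑ j, max (2 * x j - w j) 0 ≤ ∑ j, x j :=
          Finset.sum_le_sum (fun j _ => key x hx j)
      _ ≤ M := hs
  refine ⟨⟨?_, ?_⟩, bound⟩
  · rintro ⟨⟨x, hx, hs, hP⟩, -⟩
    have hsumx : ∑ j, x j = M := by
      have h1 : M ≤ ∑ j, x j := by
        rw [hP]; exact Finset.sum_le_sum (fun j _ => key x hx j)
      linarith
    have hmax : ∑ j, max (2 * x j - w j) 0 = ∑ j, x j := by
      rw [← hP, hsumx]
    have heach : ∀ j : Fin n, max (2 * x j - w j) 0 = x j := by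
      have h0 : ∑ j, (x j - max (2 * x j - w j) 0) = 0 := by
        rw [Finset.sum_sub_distrib, hmax, sub_self]
      intro j
      have := (Finset.sum_eq_zero_iff_of_nonneg
        (fun i _ => by linarith [key x hx i])).1 h0 j (Finset.mem_univ j)
      linarith
    refine ⟨Finset.univ.filter (fun j => x j = w j), ?_⟩
    have h1 : ∑ j ∈ Finset.univ.filter (fun j => x j = w j), w j = ∑ j, x j := by
      rw [← Finset.sum_filter_add_sum_filter_not Finset.univ (fun j => x j = w j) x]
      have h2 : ∑ j ∈ Finset.univ.filter (fun j => ¬ x j = w j), x j = 0 := by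
        apply Finset.sum_eq_zero
        intro j hj
        rw [Finset.mem_filter] at hj
        have hm := heach j
        rcases le_or_gt (2 * x j - w j) 0 with h | h
        · rw [max_eq_right h] at hm; linarith
        · rw [max_eq_left h.le] at hm
          exact absurd (by linarith) hj.2
      rw [h2, add_zero]
      exact Finset.sum_congr rfl (fun j hj => ((Finset.mem_filter.1 hj).2).symm)
    rw [h1, hsumx]
  · rintro ⟨S, hS⟩
    constructor
    · refine ⟨fun j => if j ∈ S then w j else 0, ?_, ?_, ?_⟩
      · intro j
        by_cases h : j ∈ S <;> simp [h, (hw j).le]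
      · have : ∑ j, (if j ∈ S then w j else 0) = ∑ j ∈ S, w j := by
          simp [Finset.sum_ite_mem]
        rw [this, hS]
      · have hterm : ∀ j : Fin n,
            max (2 * (if j ∈ S then w j else 0) - w j) 0 = if j ∈ S then w j else 0 := by
          intro j
          by_cases h : j ∈ S <;> simp only [h, if_true, if_false]
          · rw [show 2 * w j - w j = w j by ring]
            exact max_eq_left (hw j).le
          · rw [max_eq_right (by linarith [hw j])]
        simp only [hterm, Finset.sum_ite_mem, Finset.univ_inter, hS]
    · rintro P ⟨x, hx, hs, hP⟩
      rw [hP]; exact bound x hx hs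
end

section
/- Consider the two-piece convex knapsack problem (CK). There exists an optimal solution x* of CK such that at most one index j ∈ [n] satisfies 0 < x*_j < u_j; equivalently, there exist S* ⊆ [n] and at most one index f ∈ [n] \ S* with x*_j = u_j for all j ∈ S*, 0 ≤ x*_f < u_f, and x*_j = 0 for all j ∈ [n] \ (S* ∪ {f}). -/
/-!
The profit is a sum of maxima of affine functions, hence convex, and the feasible set is a
compact convex polytope. The maximizers of a convex function form a closed face of the polytope,
and by the Krein–Milman lemma this face has an extreme point, which is then an extreme point of
the polytope. At an extreme point at most one coordinate is fractional: with two, shifting a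
little capacity from one to the other, in either direction, stays feasible and exhibits the point
as a midpoint of two other feasible points.
-/

open Set

section ConvexOn

theorem ConvexOn.sum {𝕜 E β ι : Type*} [Semiring 𝕜] [PartialOrder 𝕜] [AddCommMonoid E]
    [SMul 𝕜 E] [AddCommMonoid β] [PartialOrder β] [IsOrderedAddMonoid β] [Module 𝕜 β]
    {s : Set E} {f : ι → E → β} (hs : Convex 𝕜 s) (t : Finset ι)
    (hf : ∀ i ∈ t, ConvexOn 𝕜 s (f i)) : ConvexOn 𝕜 s (fun x => ∑ i ∈ t, f i x) := by
  classical
  induction t using Finset.induction_on with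
  | empty => simpa using convexOn_const (0 : β) hs
  | insert i t hi ih =>
    simp only [Finset.sum_insert hi]
    exact (hf i (Finset.mem_insert_self i t)).add
      (ih fun j hj => hf j (Finset.mem_insert_of_mem hj))

theorem ConvexOn.isExtreme_sep_le {𝕜 E : Type*} [Field 𝕜] [LinearOrder 𝕜]
    [IsStrictOrderedRing 𝕜] [AddCommGroup E] [Module 𝕜 E] {s : Set E} {f : E → 𝕜}
    (hf : ConvexOn 𝕜 s f) {M : 𝕜} (hM : ∀ x ∈ s, f x ≤ M) :
    IsExtreme 𝕜 s {x ∈ s | M ≤ f x} := by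
  refine ⟨sep_subset _ _, fun x₁ hx₁ x₂ hx₂ x ⟨_, hMx⟩ ⟨a, b, ha, hb, hab, hx_eq⟩ => ?_⟩
  have hconv : f x ≤ a * f x₁ + b * f x₂ := by
    simpa [← hx_eq] using hf.2 hx₁ hx₂ ha.le hb.le hab
  refine ⟨hx₁, ?_⟩
  by_contra! hlt
  have hsplit : a * M + b * M = M := by rw [← add_mul, hab, one_mul]
  linarith [mul_lt_mul_of_pos_left hlt ha, mul_le_mul_of_nonneg_left (hM x₂ hx₂) hb.le]

theorem IsCompact.exists_mem_extremePoints_isMaxOn {E : Type*} [AddCommGroup E] [Module ℝ E]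
    [TopologicalSpace E] [T2Space E] [IsTopologicalAddGroup E] [ContinuousSMul ℝ E]
    [LocallyConvexSpace ℝ E] {s : Set E} (hs : IsCompact s) (hne : s.Nonempty) {f : E → ℝ}
    (hf : ConvexOn ℝ s f) (hfc : ContinuousOn f s) :
    ∃ x ∈ s.extremePoints ℝ, IsMaxOn f s x := by
  obtain ⟨a, ha, hmax⟩ := hs.exists_isMaxOn hne hfc
  have hle : ∀ x ∈ s, f x ≤ f a := isMaxOn_iff.mp hmax
  have hface : IsCompact {x ∈ s | f a ≤ f x} :=
    hs.of_isClosed_subset (hfc.preimage_isClosed_of_isClosed hs.isClosed isClosed_Ici)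
      (sep_subset _ _)
  obtain ⟨x, hx⟩ := hface.extremePoints_nonempty ⟨a, ha, le_rfl⟩
  exact ⟨x, (hf.isExtreme_sep_le hle).extremePoints_subset_extremePoints hx,
    isMaxOn_iff.mpr fun y hy => (hle y hy).trans hx.1.2⟩

end ConvexOn

section Knapsack

variable {ι : Type*} [Fintype ι]

def knapsackPolytope (u : ι → ℝ) (Ω : ℝ) : Set (ι → ℝ) :=
  {x | (∀ j, 0 ≤ x j ∧ x j ≤ u j) ∧ ∑ j, x j ≤ Ω}

variable {u : ι → ℝ} {Ω : ℝ}

theorem knapsackPolytope_eq_pi_inter : knapsackPolytope u Ω =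
    (univ.pi fun j => Icc 0 (u j)) ∩ {x | ∑ j, x j ≤ Ω} := by
  ext x
  simp only [knapsackPolytope, mem_inter_iff, mem_univ_pi, mem_Icc]
  rfl

theorem isCompact_knapsackPolytope : IsCompact (knapsackPolytope u Ω) := by
  rw [knapsackPolytope_eq_pi_inter]
  exact (isCompact_univ_pi fun j => isCompact_Icc).inter_right
    (isClosed_le (by fun_prop) continuous_const)

theorem convex_knapsackPolytope : Convex ℝ (knapsackPolytope u Ω) := by
  rw [knapsackPolytope_eq_pi_inter]
  refine (convex_pi fun j _ => convex_Icc _ _).inter (convex_halfSpace_le ?_ Ω)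
  exact ⟨fun x y => Finset.sum_add_distrib, fun c x => by simp [Finset.mul_sum]⟩

theorem zero_mem_knapsackPolytope (hu : ∀ j, 0 ≤ u j) (hΩ : 0 ≤ Ω) :
    0 ∈ knapsackPolytope u Ω :=
  ⟨fun j => ⟨le_rfl, hu j⟩, by simpa using hΩ⟩

theorem add_single_sub_single_mem_knapsackPolytope [DecidableEq ι] {x : ι → ℝ}
    (hx : x ∈ knapsackPolytope u Ω) {i j : ι} (hij : i ≠ j) {t : ℝ}
    (hi : 0 ≤ x i + t ∧ x i + t ≤ u i) (hj : 0 ≤ x j - t ∧ x j - t ≤ u j) :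
    x + Pi.single i t - Pi.single j t ∈ knapsackPolytope u Ω := by
  refine ⟨fun k => ?_, ?_⟩
  · rcases eq_or_ne k i with rfl | hki
    · simpa [hij] using hi
    rcases eq_or_ne k j with rfl | hkj
    · simpa [hki] using hj
    simpa [hki, hkj] using hx.1 k
  · simpa [Finset.sum_add_distrib, Finset.sum_sub_distrib] using hx.2

theorem eq_of_mem_extremePoints_knapsackPolytope {x : ι → ℝ}
    (hx : x ∈ (knapsackPolytope u Ω).extremePoints ℝ) {i j : ι}
    (hi : 0 < x i ∧ x i < u i) (hj : 0 < x j ∧ x j < u j) : i = j := by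
  classical
  by_contra hij
  set ε := min (min (x i) (u i - x i)) (min (x j) (u j - x j))
  have hε : 0 < ε := lt_min (lt_min hi.1 (sub_pos.2 hi.2)) (lt_min hj.1 (sub_pos.2 hj.2))
  have hεi : ε ≤ x i ∧ ε ≤ u i - x i := le_min_iff.1 (min_le_left _ _)
  have hεj : ε ≤ x j ∧ ε ≤ u j - x j := le_min_iff.1 (min_le_right _ _)
  have hplus := add_single_sub_single_mem_knapsackPolytope hx.1 hij (t := ε)
    ⟨by linarith, by linarith⟩ ⟨by linarith, by linarith⟩
  have hminus := add_single_sub_single_mem_knapsackPolytope hx.1 hij (t := -ε)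
    ⟨by linarith, by linarith⟩ ⟨by linarith, by linarith⟩
  have hmid : x ∈ openSegment ℝ (x + Pi.single i ε - Pi.single j ε)
      (x + Pi.single i (-ε) - Pi.single j (-ε)) := by
    refine ⟨1 / 2, 1 / 2, by norm_num, by norm_num, by norm_num, ?_⟩
    ext k
    simp only [Pi.add_apply, Pi.sub_apply, Pi.smul_apply, Pi.single_neg, smul_eq_mul,
      Pi.neg_apply]
    ring
  have hεzero := congrFun (hx.2 hplus hminus hmid) i
  simp [hij, hε.ne'] at hεzero

theorem convexOn_sum_max_affine (γ β : ι → ℝ) :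
    ConvexOn ℝ univ (fun x : ι → ℝ => ∑ j, max (γ j + β j * x j) 0) := by
  refine ConvexOn.sum convex_univ _ fun j _ => ?_
  have hlin : ConvexOn ℝ univ (β j • LinearMap.proj (R := ℝ) (φ := fun _ : ι => ℝ) j) :=
    LinearMap.convexOn _ convex_univ
  exact ((convexOn_const (γ j) convex_univ).add hlin).sup (convexOn_const 0 convex_univ)

end Knapsack

theorem stmt_8_general (n : ℕ) (γ β u : Fin n → ℝ)
    (hu : ∀ j, 0 < u j)
    (Ω : ℝ) (hΩ : 0 < Ω) :
    ∃ xstar : Fin n → ℝ,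
      ((∀ j, 0 ≤ xstar j ∧ xstar j ≤ u j) ∧ ∑ j, xstar j ≤ Ω) ∧
      IsGreatest ((fun x : Fin n → ℝ => ∑ j, max (γ j + β j * x j) 0) ''
          {x | (∀ j, 0 ≤ x j ∧ x j ≤ u j) ∧ ∑ j, x j ≤ Ω})
        (∑ j, max (γ j + β j * xstar j) 0) ∧
      (∀ i j : Fin n, (0 < xstar i ∧ xstar i < u i) →
        (0 < xstar j ∧ xstar j < u j) → i = j) := by
  obtain ⟨x, hx, hmax⟩ := isCompact_knapsackPolytope.exists_mem_extremePoints_isMaxOn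
    ⟨0, zero_mem_knapsackPolytope (fun j => (hu j).le) hΩ.le⟩
    ((convexOn_sum_max_affine γ β).subset (subset_univ _) convex_knapsackPolytope)
    (by fun_prop)
  refine ⟨x, hx.1, ⟨mem_image_of_mem _ hx.1, ?_⟩,
    fun i j hi hj => eq_of_mem_extremePoints_knapsackPolytope hx hi hj⟩
  rintro _ ⟨y, hy, rfl⟩
  exact hmax hy

/-- Observation 2: the two-piece convex knapsack problem (CK) has an optimal
(extreme-point) solution with at most one coordinate strictly between its
bounds; all other coordinates are `0` or `u_j`. -/
theorem stmt_8 (n : ℕ) (hn : 1 ≤ n) (γ β u : Fin n → ℝ)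
    (hβ : ∀ j, 0 < β j) (hu : ∀ j, 0 < u j) (hpos : ∀ j, 0 < γ j + β j * u j)
    (Ω : ℝ) (hΩ : 0 < Ω) :
    ∃ xstar : Fin n → ℝ,
      ((∀ j, 0 ≤ xstar j ∧ xstar j ≤ u j) ∧ ∑ j, xstar j ≤ Ω) ∧
      IsGreatest ((fun x : Fin n → ℝ => ∑ j, max (γ j + β j * x j) 0) ''
          {x | (∀ j, 0 ≤ x j ∧ x j ≤ u j) ∧ ∑ j, x j ≤ Ω})
        (∑ j, max (γ j + β j * xstar j) 0) ∧
      (∀ i j : Fin n, (0 < xstar i ∧ xstar i < u i) →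
        (0 < xstar j ∧ xstar j < u j) → i = j) :=
  stmt_8_general n γ β u hu Ω hΩ
end

section
/- Consider the two-piece convex knapsack problem (CK) and assume the items are ordered so that β_1 ≥ β_2 ≥ … ≥ β_n, with ties broken so that whenever i < j and β_i = β_j one has u_i ≤ u_j. Then there exist an optimal solution x* of CK and an index f ∈ [n] such that x*_j ∈ {0, u_j} for every j < f and x*_j = 0 for every j > f (only the coordinate x*_f may lie strictly between 0 and u_f). -/
/-!
Pick an optimal solution `x` that is lexicographically extreme: of minimal total `∑ x j` among
optimal solutions, and of maximal weight `w ⬝ᵥ x` among those, for a strictly decreasing `w`.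
If `0 < x j` but `γ j + β j * x j < 0`, zeroing `x j` would keep the profit and lower the total,
so every item in use sits on the linear piece of its profit. Now if `x j` is fractional and
`j < k` with `x k > 0`, shifting a little mass from `k` to `j` keeps the total and raises the
weight, while item `j` gains at rate `β j ≥ β k` and item `k` loses at rate at most `β k`, so the
profit does not drop: a contradiction. Hence all coordinates after a fractional one vanish, and
none before it is fractional.
-/

open Finset Matrix

theorem IsCompact.exists_lex_optimum {X : Type*} [TopologicalSpace X] {K : Set X}
    (hK : IsCompact K) (hne : K.Nonempty) {f g h : X → ℝ} (hf : Continuous f)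
    (hg : Continuous g) (hh : Continuous h) :
    ∃ z ∈ K, (∀ y ∈ K, f y ≤ f z) ∧ (∀ y ∈ K, f y = f z → g z ≤ g y) ∧
      ∀ y ∈ K, f y = f z → g y = g z → h y ≤ h z := by
  obtain ⟨x₀, hx₀, hmax⟩ := hK.exists_isMaxOn hne hf.continuousOn
  have hK₁ : IsCompact (K ∩ f ⁻¹' {f x₀}) := hK.inter_right (isClosed_singleton.preimage hf)
  obtain ⟨x₁, hx₁, hmin⟩ := hK₁.exists_isMinOn ⟨x₀, hx₀, rfl⟩ hg.continuousOn
  have hK₂ : IsCompact ((K ∩ f ⁻¹' {f x₀}) ∩ g ⁻¹' {g x₁}) :=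
    hK₁.inter_right (isClosed_singleton.preimage hg)
  obtain ⟨z, ⟨⟨hzK, hzf⟩, hzg⟩, hzmax⟩ := hK₂.exists_isMaxOn ⟨x₁, hx₁, rfl⟩ hh.continuousOn
  simp only [Set.mem_preimage, Set.mem_singleton_iff] at hzf hzg
  refine ⟨z, hzK, fun y hy => hzf ▸ hmax hy, fun y hy hyz => ?_, fun y hy hyf hyg => ?_⟩
  · exact hzg ▸ hmin ⟨hy, hyz.trans hzf⟩
  · exact hzmax ⟨⟨hy, hyf.trans hzf⟩, hyg.trans hzg⟩

theorem Finset.sum_apply_sub_sum_apply_of_eq_off {ι : Type*} [Fintype ι] (g : ι → ℝ → ℝ)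
    (s : Finset ι) {x y : ι → ℝ} (h : ∀ i ∉ s, y i = x i) :
    ∑ i, g i (y i) - ∑ i, g i (x i) = ∑ i ∈ s, (g i (y i) - g i (x i)) := by
  rw [← Finset.sum_sub_distrib]
  exact (Finset.sum_subset (subset_univ s) fun i _ hi => by simp [h i hi]).symm

section Transfer

variable {ι : Type*} [DecidableEq ι] {j k : ι}

def transfer (j k : ι) : ι → ℝ :=
  Pi.single j 1 - Pi.single k 1

theorem transfer_apply_left (hjk : j ≠ k) : transfer j k j = 1 := by
  simp [transfer, hjk]

theorem transfer_apply_right (hjk : j ≠ k) : transfer j k k = -1 := by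
  simp [transfer, hjk.symm]

theorem transfer_apply_of_ne {i : ι} (hij : i ≠ j) (hik : i ≠ k) : transfer j k i = 0 := by
  simp [transfer, hij, hik]

theorem sum_add_smul_transfer [Fintype ι] (x : ι → ℝ) (t : ℝ) :
    ∑ i, (x + t • transfer j k) i = ∑ i, x i := by
  simp [transfer, Finset.sum_add_distrib, Finset.sum_sub_distrib, ← Finset.mul_sum]

theorem dotProduct_add_smul_transfer [Fintype ι] (w x : ι → ℝ) (t : ℝ) :
    w ⬝ᵥ (x + t • transfer j k) = w ⬝ᵥ x + t * (w j - w k) := by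
  simp [transfer, dotProduct_add, dotProduct_smul, dotProduct_sub, dotProduct_single]

end Transfer

section Knapsack

variable {ι : Type*} [Fintype ι]

def ckFeasible (u : ι → ℝ) (Ω : ℝ) : Set (ι → ℝ) :=
  {x | (∀ j, 0 ≤ x j ∧ x j ≤ u j) ∧ ∑ j, x j ≤ Ω}

def ckProfit (γ β x : ι → ℝ) : ℝ :=
  ∑ j, max (γ j + β j * x j) 0

theorem ckProfit_sub_ckProfit_of_eq_off (γ β : ι → ℝ) (s : Finset ι) {x y : ι → ℝ}
    (h : ∀ i ∉ s, y i = x i) :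
    ckProfit γ β y - ckProfit γ β x =
      ∑ i ∈ s, (max (γ i + β i * y i) 0 - max (γ i + β i * x i) 0) :=
  Finset.sum_apply_sub_sum_apply_of_eq_off (fun i t => max (γ i + β i * t) 0) s h

variable (γ β u : ι → ℝ) (Ω : ℝ)

theorem isCompact_ckFeasible : IsCompact (ckFeasible u Ω) := by
  have hbox : IsCompact (Set.univ.pi fun j => Set.Icc 0 (u j)) :=
    isCompact_univ_pi fun j => isCompact_Icc
  have hsum : IsClosed {x : ι → ℝ | ∑ j, x j ≤ Ω} := isClosed_le (by fun_prop) (by fun_prop)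
  convert hbox.inter_right hsum using 1
  ext x
  simp only [ckFeasible, Set.mem_ofPred_eq, Set.mem_inter_iff, Set.mem_pi, Set.mem_univ,
    Set.mem_Icc, forall_const]

theorem zero_mem_ckFeasible (hu : ∀ j, 0 ≤ u j) (hΩ : 0 ≤ Ω) : 0 ∈ ckFeasible u Ω :=
  ⟨fun j => ⟨le_rfl, hu j⟩, by simpa using hΩ⟩

theorem continuous_ckProfit : Continuous (ckProfit γ β) := by
  unfold ckProfit
  fun_prop

structure IsLexOptimal (w z : ι → ℝ) : Prop where
  mem : z ∈ ckFeasible u Ω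
  profit_le : ∀ y ∈ ckFeasible u Ω, ckProfit γ β y ≤ ckProfit γ β z
  sum_le : ∀ y ∈ ckFeasible u Ω, ckProfit γ β y = ckProfit γ β z → ∑ i, z i ≤ ∑ i, y i
  dotProduct_le : ∀ y ∈ ckFeasible u Ω, ckProfit γ β y = ckProfit γ β z →
    ∑ i, y i = ∑ i, z i → w ⬝ᵥ y ≤ w ⬝ᵥ z

theorem exists_isLexOptimal (w : ι → ℝ) (hu : ∀ j, 0 ≤ u j) (hΩ : 0 ≤ Ω) :
    ∃ z, IsLexOptimal γ β u Ω w z := by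
  obtain ⟨z, hz, hprofit, hsum, hdot⟩ := (isCompact_ckFeasible u Ω).exists_lex_optimum
    ⟨0, zero_mem_ckFeasible u Ω hu hΩ⟩ (continuous_ckProfit γ β)
    (continuous_finsetSum _ fun i _ => continuous_apply i)
    (continuous_finsetSum _ fun i _ => continuous_const.mul (continuous_apply i))
  exact ⟨z, hz, hprofit, hsum, hdot⟩

variable {γ β u Ω}

theorem add_smul_transfer_mem_ckFeasible [DecidableEq ι] {j k : ι} {x : ι → ℝ} {t : ℝ}
    (hx : x ∈ ckFeasible u Ω) (hjk : j ≠ k) (hj : 0 ≤ x j + t ∧ x j + t ≤ u j)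
    (hk : 0 ≤ x k - t ∧ x k - t ≤ u k) :
    x + t • transfer j k ∈ ckFeasible u Ω := by
  refine ⟨fun i => ?_, by simpa only [sum_add_smul_transfer] using hx.2⟩
  rcases eq_or_ne i j with rfl | hij
  · simpa [transfer_apply_left hjk] using hj
  rcases eq_or_ne i k with rfl | hik
  · simpa [transfer_apply_right hjk, ← sub_eq_add_neg] using hk
  · simpa [transfer_apply_of_ne hij hik] using hx.1 i

theorem IsLexOptimal.isGreatest {w z : ι → ℝ} (hz : IsLexOptimal γ β u Ω w z) :
    IsGreatest (ckProfit γ β '' ckFeasible u Ω) (ckProfit γ β z) := by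
  refine ⟨⟨z, hz.mem, rfl⟩, ?_⟩
  rintro _ ⟨y, hy, rfl⟩
  exact hz.profit_le y hy

theorem IsLexOptimal.affine_nonneg_of_pos [DecidableEq ι] {w z : ι → ℝ}
    (hz : IsLexOptimal γ β u Ω w z) {j : ι} (hj : 0 < z j) : 0 ≤ γ j + β j * z j := by
  by_contra! hneg
  set y := Function.update z j 0
  have hoff : ∀ i ∉ ({j} : Finset ι), y i = z i := fun i hi =>
    Function.update_of_ne (by simpa using hi) _ _
  have hy : y ∈ ckFeasible u Ω := by
    refine ⟨fun i => ?_, ?_⟩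
    · rcases eq_or_ne i j with rfl | hi
      · simpa [y] using (hz.mem.1 i).1.trans (hz.mem.1 i).2
      · simpa [y, Function.update_of_ne hi] using hz.mem.1 i
    · have := Finset.sum_apply_sub_sum_apply_of_eq_off (fun _ t => t) {j} hoff
      simp only [sum_singleton, Function.update_self, y] at this
      linarith [hz.mem.2]
  -- zeroing coordinate `j` cannot lower its profit term, which is already `0`
  have hprofit : ckProfit γ β y = ckProfit γ β z := by
    refine le_antisymm (hz.profit_le y hy) (sub_nonneg.1 ?_)
    rw [ckProfit_sub_ckProfit_of_eq_off γ β {j} hoff]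
    simp [y, max_eq_right hneg.le]
  have hsum := Finset.sum_apply_sub_sum_apply_of_eq_off (fun _ t => t) {j} hoff
  simp only [sum_singleton, Function.update_self, y] at hsum
  linarith [hz.sum_le y hy hprofit]

section Exchange

variable [LinearOrder ι] {w z : ι → ℝ} {j k : ι}

theorem IsLexOptimal.ckProfit_add_smul_transfer_lt (hz : IsLexOptimal γ β u Ω w z)
    (hw : StrictAnti w) (hjk : j < k) {t : ℝ} (ht : 0 < t)
    (hmem : z + t • transfer j k ∈ ckFeasible u Ω) :
    ckProfit γ β (z + t • transfer j k) < ckProfit γ β z := by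
  refine lt_of_le_of_ne (hz.profit_le _ hmem) fun heq => ?_
  have := hz.dotProduct_le _ hmem heq (sum_add_smul_transfer z t)
  rw [dotProduct_add_smul_transfer] at this
  nlinarith [hw hjk]

theorem IsLexOptimal.eq_zero_of_lt (hz : IsLexOptimal γ β u Ω w z) (hw : StrictAnti w)
    (hβ : β k ≤ β j) (hβk : 0 ≤ β k) (hjk : j < k) (hj : z j ∈ Set.Ioo 0 (u j)) :
    z k = 0 := by
  refine le_antisymm (not_lt.1 fun hk => ?_) (hz.mem.1 k).1
  obtain ⟨hj0, hju⟩ := hj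
  set t := min (u j - z j) (z k)
  have ht : 0 < t := lt_min (sub_pos.2 hju) hk
  have hmem : z + t • transfer j k ∈ ckFeasible u Ω :=
    add_smul_transfer_mem_ckFeasible hz.mem hjk.ne
      ⟨by linarith [min_le_left (u j - z j) (z k)], by linarith [min_le_left (u j - z j) (z k)]⟩
      ⟨by linarith [min_le_right (u j - z j) (z k)],
        by linarith [min_le_right (u j - z j) (z k), (hz.mem.1 k).2]⟩
  have hoff : ∀ i ∉ ({j, k} : Finset ι), (z + t • transfer j k) i = z i := by
    intro i hi
    simp only [mem_insert, mem_singleton, not_or] at hi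
    simp [transfer_apply_of_ne hi.1 hi.2]
  -- item `j` gains at rate `β j`, item `k` loses at rate at most `β k ≤ β j`
  have hgain : 0 ≤ ckProfit γ β (z + t • transfer j k) - ckProfit γ β z := by
    rw [ckProfit_sub_ckProfit_of_eq_off γ β _ hoff, sum_pair hjk.ne]
    simp only [Pi.add_apply, Pi.smul_apply, smul_eq_mul, transfer_apply_left hjk.ne,
      transfer_apply_right hjk.ne]
    rw [max_eq_left (hz.affine_nonneg_of_pos hj0)]
    have h₁ := le_max_left (γ j + β j * (z j + t * 1)) 0
    have h₂ : max (γ k + β k * z k) 0 ≤ max (γ k + β k * (z k + t * -1)) 0 + β k * t :=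
      max_le (by linarith [le_max_left (γ k + β k * (z k + t * -1)) 0])
        (by nlinarith [le_max_right (γ k + β k * (z k + t * -1)) 0])
    nlinarith
  exact (hz.ckProfit_add_smul_transfer_lt hw hjk ht hmem).not_ge (sub_nonneg.1 hgain)

theorem IsLexOptimal.exists_index [Nonempty ι] (hz : IsLexOptimal γ β u Ω w z)
    (hw : StrictAnti w) (hβ : Antitone β) (hβ0 : ∀ j, 0 ≤ β j) :
    ∃ f, (∀ j, j < f → z j = 0 ∨ z j = u j) ∧ ∀ j, f < j → z j = 0 := by
  have hbin : ∀ j, z j ∉ Set.Ioo 0 (u j) → z j = 0 ∨ z j = u j := by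
    intro j hj
    obtain ⟨h0, hu⟩ := hz.mem.1 j
    rcases h0.eq_or_lt with h | h
    · exact Or.inl h.symm
    · exact Or.inr (hu.eq_of_not_lt fun h' => hj ⟨h, h'⟩)
  by_cases hfrac : ∃ f, z f ∈ Set.Ioo 0 (u f)
  · obtain ⟨f, hf⟩ := hfrac
    refine ⟨f, fun j hjf => hbin j fun hj => hf.1.ne' ?_,
      fun k hfk => hz.eq_zero_of_lt hw (hβ hfk.le) (hβ0 k) hfk hf⟩
    exact hz.eq_zero_of_lt hw (hβ hjf.le) (hβ0 f) hjf hj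
  · obtain ⟨f, hf⟩ := Finite.exists_max (id : ι → ι)
    exact ⟨f, fun j _ => hbin j (not_exists.1 hfrac j),
      fun j hfj => absurd (hf j) (not_le.2 hfj)⟩

end Exchange

end Knapsack

theorem stmt_10_general (n : ℕ) (hn : 1 ≤ n) (γ β u : Fin n → ℝ)
    (hβ : ∀ j, 0 < β j) (hu : ∀ j, 0 < u j)
    (Ω : ℝ) (hΩ : 0 < Ω)
    (hord : ∀ i j : Fin n, i ≤ j → β j ≤ β i) :
    ∃ (xstar : Fin n → ℝ) (f : Fin n),
      ((∀ j, 0 ≤ xstar j ∧ xstar j ≤ u j) ∧ ∑ j, xstar j ≤ Ω) ∧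
      IsGreatest ((fun x : Fin n → ℝ => ∑ j, max (γ j + β j * x j) 0) ''
          {x | (∀ j, 0 ≤ x j ∧ x j ≤ u j) ∧ ∑ j, x j ≤ Ω})
        (∑ j, max (γ j + β j * xstar j) 0) ∧
      (∀ j : Fin n, j < f → xstar j = 0 ∨ xstar j = u j) ∧
      (∀ j : Fin n, f < j → xstar j = 0) := by
  have : Nonempty (Fin n) := ⟨⟨0, hn⟩⟩
  have hw : StrictAnti fun i : Fin n => -((i : ℕ) : ℝ) := fun i j hij => by
    simpa using (Fin.lt_def.1 hij)
  obtain ⟨z, hz⟩ := exists_isLexOptimal γ β u Ω _ (fun j => (hu j).le) hΩ.le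
  obtain ⟨f, hlt, hgt⟩ := hz.exists_index hw (fun i j hij => hord i j hij) (fun j => (hβ j).le)
  exact ⟨z, f, hz.mem, hz.isGreatest, hlt, hgt⟩

/-- With items sorted by non-increasing slopes (ties broken by non-decreasing
upper bounds), CK admits an optimal solution and an index `f` such that every
item before `f` is at `0` or at its bound, and every item after `f` is `0`. -/
theorem stmt_10 (n : ℕ) (hn : 1 ≤ n) (γ β u : Fin n → ℝ)
    (hβ : ∀ j, 0 < β j) (hu : ∀ j, 0 < u j) (hpos : ∀ j, 0 < γ j + β j * u j)
    (Ω : ℝ) (hΩ : 0 < Ω)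
    (hord : ∀ i j : Fin n, i ≤ j → β j ≤ β i)
    (htie : ∀ i j : Fin n, i < j → β i = β j → u i ≤ u j) :
    ∃ (xstar : Fin n → ℝ) (f : Fin n),
      ((∀ j, 0 ≤ xstar j ∧ xstar j ≤ u j) ∧ ∑ j, xstar j ≤ Ω) ∧
      IsGreatest ((fun x : Fin n → ℝ => ∑ j, max (γ j + β j * x j) 0) ''
          {x | (∀ j, 0 ≤ x j ∧ x j ≤ u j) ∧ ∑ j, x j ≤ Ω})
        (∑ j, max (γ j + β j * xstar j) 0) ∧
      (∀ j : Fin n, j < f → xstar j = 0 ∨ xstar j = u j) ∧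
      (∀ j : Fin n, f < j → xstar j = 0) :=
  stmt_10_general n hn γ β u hβ hu Ω hΩ hord
end

section
/- Consider the two-piece convex knapsack problem (CK) with the additional assumptions that γ_j ≤ 0 (so p_j(0) = 0) and u_j ≤ Ω for every j ∈ [n], and that the items are indexed in non-increasing profit-density order p_1(u_1)/u_1 ≥ p_2(u_2)/u_2 ≥ … ≥ p_n(u_n)/u_n. Define P_R = max { Σ_{j∈[k]} p_j(u_j) : k ∈ {0, 1, …, n}, Σ_{j∈[k]} u_j ≤ Ω } and P_min = max( max_{j∈[n]} p_j(u_j), P_R ). Then P_min ≤ P* ≤ 2·P_min. -/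
/-!
With `γ_j ≤ 0`, the profit `max (γ_j + β_j x) 0` lies below the chord `d_j x` of density
`d_j = p_j(u_j) / u_j` on `[0, u_j]`, so `P*` is at most the optimum of the fractional knapsack
with densities `d_j`. Filling the items greedily in density order until the first item `k` that
does not fit, the fractional optimum is at most the profit of the greedy prefix plus
`d_k u_k = p_k(u_k)`, hence at most `P_R + max_j p_j(u_j) ≤ 2 P_min`. Conversely, every greedy
prefix and every single item (as `u_j ≤ Ω`) is a feasible packing of whole items, which gives
`P_min ≤ P*`.
-/

open Finset

section Knapsack

variable {ι : Type*} [Fintype ι]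

def knapsackValue (γ β x : ι → ℝ) : ℝ := ∑ j, max (γ j + β j * x j) 0

def knapsackFeasible (u : ι → ℝ) (Ω : ℝ) : Set (ι → ℝ) :=
  {x | (∀ j, 0 ≤ x j ∧ x j ≤ u j) ∧ ∑ j, x j ≤ Ω}

lemma max_add_mul_le_div_mul {γ β u x : ℝ} (hγ : γ ≤ 0) (hu : 0 < u)
    (hpos : 0 ≤ γ + β * u) (hx : 0 ≤ x) (hxu : x ≤ u) :
    max (γ + β * x) 0 ≤ (γ + β * u) / u * x := by
  rw [div_mul_eq_mul_div]
  refine max_le ?_ (by positivity)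
  rw [le_div_iff₀ hu]
  linarith [mul_nonpos_of_nonpos_of_nonneg hγ (sub_nonneg.2 hxu)]

lemma knapsackValue_le_sum_div_mul {γ β u x : ι → ℝ} (hγ : ∀ j, γ j ≤ 0)
    (hu : ∀ j, 0 < u j) (hpos : ∀ j, 0 ≤ γ j + β j * u j)
    (hx : ∀ j, 0 ≤ x j ∧ x j ≤ u j) :
    knapsackValue γ β x ≤ ∑ j, (γ j + β j * u j) / u j * x j :=
  sum_le_sum fun j _ => max_add_mul_le_div_mul (hγ j) (hu j) (hpos j) (hx j).1 (hx j).2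

lemma sum_le_of_mem_upperBounds_knapsackValue {γ β u : ι → ℝ} {Ω P : ℝ}
    (hP : P ∈ upperBounds (knapsackValue γ β '' knapsackFeasible u Ω))
    (hγ : ∀ j, γ j ≤ 0) (hu : ∀ j, 0 ≤ u j) (hpos : ∀ j, 0 ≤ γ j + β j * u j)
    (S : Finset ι) (hS : ∑ j ∈ S, u j ≤ Ω) : ∑ j ∈ S, (γ j + β j * u j) ≤ P := by
  classical
  let x : ι → ℝ := fun j => if j ∈ S then u j else 0
  have hfeas : x ∈ knapsackFeasible u Ω := by
    refine ⟨fun j => ?_, by simpa [x, sum_ite_mem] using hS⟩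
    by_cases hj : j ∈ S <;> simp [x, hj, hu j]
  have hval : knapsackValue γ β x = ∑ j ∈ S, (γ j + β j * u j) := by
    have hterm : ∀ j, max (γ j + β j * x j) 0 = if j ∈ S then γ j + β j * u j else 0 := by
      intro j
      by_cases hj : j ∈ S <;> simp [x, hj, hpos j, hγ j]
    rw [knapsackValue, sum_congr rfl fun j _ => hterm j, sum_ite_mem, univ_inter]
  exact hval ▸ hP ⟨x, hfeas, rfl⟩

end Knapsack

section Prefix

variable {n : ℕ} {M : Type*} [AddCommMonoid M]

def prefixSum (f : Fin n → M) (k : ℕ) : M :=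
  ∑ j ∈ univ.filter (fun j : Fin n => (j : ℕ) < k), f j

lemma prefixSum_zero (f : Fin n → M) : prefixSum f 0 = 0 := by
  simp [prefixSum]

lemma prefixSum_succ (f : Fin n → M) {k : ℕ} (hk : k < n) :
    prefixSum f (k + 1) = prefixSum f k + f ⟨k, hk⟩ := by
  have : univ.filter (fun j : Fin n => (j : ℕ) < k + 1) =
      insert ⟨k, hk⟩ (univ.filter fun j : Fin n => (j : ℕ) < k) := by
    ext j
    simp [Fin.ext_iff]
    omega
  rw [prefixSum, this, sum_insert (by simp), add_comm, prefixSum]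

lemma prefixSum_of_le (f : Fin n → M) {k : ℕ} (hk : n ≤ k) :
    prefixSum f k = ∑ j, f j := by
  rw [prefixSum, filter_true_of_mem fun j _ => j.isLt.trans_le hk]

lemma exists_maximal_prefixSum_le (u : Fin n → ℝ) {Ω : ℝ} (hΩ : 0 ≤ Ω) :
    ∃ k ≤ n, prefixSum u k ≤ Ω ∧ ∀ hk : k < n, Ω < prefixSum u k + u ⟨k, hk⟩ := by
  refine ⟨Nat.findGreatest (fun m => prefixSum u m ≤ Ω) n, Nat.findGreatest_le n,
    Nat.findGreatest_spec (P := fun m => prefixSum u m ≤ Ω) (Nat.zero_le n)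
      (by rwa [prefixSum_zero]), fun hk => ?_⟩
  rw [← prefixSum_succ]
  exact lt_of_not_ge (Nat.findGreatest_is_greatest (Nat.lt_succ_self _) hk)

lemma sum_mul_le_prefixSum_add_of_lt {d u x : Fin n → ℝ} (hd : Antitone d)
    (hx : ∀ j, 0 ≤ x j ∧ x j ≤ u j) {k : ℕ} (hk : k < n) (hdk : 0 ≤ d ⟨k, hk⟩)
    (hcap : ∑ j, x j ≤ prefixSum u k + u ⟨k, hk⟩) :
    ∑ j, d j * x j ≤ prefixSum (fun j => d j * u j) k + d ⟨k, hk⟩ * u ⟨k, hk⟩ := by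
  set kf : Fin n := ⟨k, hk⟩
  have hterm : ∀ j, d j * x j ≤ d kf * x j + if (j : ℕ) < k then (d j - d kf) * u j else 0 := by
    intro j
    split_ifs with hj
    · nlinarith [hd (show j ≤ kf from hj.le), hx j]
    · nlinarith [hd (show kf ≤ j from not_lt.1 hj), hx j]
  calc ∑ j, d j * x j
      ≤ ∑ j, (d kf * x j + if (j : ℕ) < k then (d j - d kf) * u j else 0) :=
        sum_le_sum fun j _ => hterm j
    _ = d kf * ∑ j, x j + prefixSum (fun j => d j * u j) k - d kf * prefixSum u k := by
        simp only [sum_add_distrib, ← mul_sum, ← sum_filter, prefixSum, sub_mul,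
          sum_sub_distrib]
        ring
    _ ≤ prefixSum (fun j => d j * u j) k + d kf * u kf := by
        linarith [mul_le_mul_of_nonneg_left hcap hdk]

lemma sum_mul_le_prefixSum_add {d u x : Fin n → ℝ} (hd : Antitone d) (hd0 : ∀ j, 0 ≤ d j)
    (hx : ∀ j, 0 ≤ x j ∧ x j ≤ u j) {k : ℕ} (hkn : k ≤ n)
    (hcap : ∀ hk : k < n, ∑ j, x j ≤ prefixSum u k + u ⟨k, hk⟩)
    {B : ℝ} (hB0 : 0 ≤ B) (hB : ∀ j, d j * u j ≤ B) :
    ∑ j, d j * x j ≤ prefixSum (fun j => d j * u j) k + B := by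
  rcases hkn.lt_or_eq with hk | rfl
  · calc ∑ j, d j * x j ≤ prefixSum (fun j => d j * u j) k + d ⟨k, hk⟩ * u ⟨k, hk⟩ :=
          sum_mul_le_prefixSum_add_of_lt hd hx hk (hd0 _) (hcap hk)
      _ ≤ prefixSum (fun j => d j * u j) k + B := by gcongr; exact hB _
  · rw [prefixSum_of_le _ le_rfl]
    linarith [sum_le_sum fun j (_ : j ∈ univ) => mul_le_mul_of_nonneg_left (hx j).2 (hd0 j)]

end Prefix

theorem stmt_13_general (n : ℕ) (γ β u : Fin n → ℝ)
    (hu : ∀ j, 0 < u j) (hpos : ∀ j, 0 < γ j + β j * u j)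
    (Ω : ℝ) (hΩ : 0 < Ω)
    (hγ : ∀ j, γ j ≤ 0) (huΩ : ∀ j, u j ≤ Ω)
    (hdens : ∀ i j : Fin n, i ≤ j →
      (γ j + β j * u j) / u j ≤ (γ i + β i * u i) / u i)
    (Pstar : ℝ)
    (hPstar : IsGreatest ((fun x : Fin n → ℝ => ∑ j, max (γ j + β j * x j) 0) ''
        {x | (∀ j, 0 ≤ x j ∧ x j ≤ u j) ∧ ∑ j, x j ≤ Ω}) Pstar)
    (PR : ℝ)
    (hPR : IsGreatest {v : ℝ | ∃ k ≤ n,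
        (∑ j ∈ Finset.univ.filter (fun j : Fin n => (j : ℕ) < k), u j ≤ Ω) ∧
        v = ∑ j ∈ Finset.univ.filter (fun j : Fin n => (j : ℕ) < k),
          (γ j + β j * u j)} PR)
    (Pmax : ℝ)
    (hPmax : IsGreatest {v : ℝ | ∃ j : Fin n, v = γ j + β j * u j} Pmax)
    (Pmin : ℝ) (hPmin : Pmin = max Pmax PR) :
    Pmin ≤ Pstar ∧ Pstar ≤ 2 * Pmin := by
  have hpos' : ∀ j, 0 ≤ γ j + β j * u j := fun j => (hpos j).le
  have hwhole := sum_le_of_mem_upperBounds_knapsackValue hPstar.2 hγ (fun j => (hu j).le) hpos'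
  have hPmax_le : Pmax ≤ Pstar := by
    obtain ⟨j, rfl⟩ := hPmax.1
    simpa using hwhole {j} (by simpa using huΩ j)
  have hPR_le : PR ≤ Pstar := by
    obtain ⟨k, -, hkΩ, rfl⟩ := hPR.1
    exact hwhole _ hkΩ
  refine ⟨hPmin ▸ max_le hPmax_le hPR_le, ?_⟩
  obtain ⟨x, ⟨hx, hxΩ⟩, rfl⟩ := hPstar.1
  obtain ⟨k, hkn, hkΩ, hkmax⟩ := exists_maximal_prefixSum_le u hΩ.le
  have hdu : ∀ j, (γ j + β j * u j) / u j * u j = γ j + β j * u j :=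
    fun j => div_mul_cancel₀ _ (hu j).ne'
  have hPmax0 : 0 ≤ Pmax := by
    obtain ⟨j, rfl⟩ := hPmax.1
    exact hpos' j
  calc knapsackValue γ β x
      ≤ ∑ j, (γ j + β j * u j) / u j * x j := knapsackValue_le_sum_div_mul hγ hu hpos' hx
    _ ≤ prefixSum (fun j => (γ j + β j * u j) / u j * u j) k + Pmax :=
        sum_mul_le_prefixSum_add hdens (fun j => div_nonneg (hpos' j) (hu j).le) hx hkn
          (fun hk => hxΩ.trans (hkmax hk).le) hPmax0 fun j => (hdu j).symm ▸ hPmax.2 ⟨j, rfl⟩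
    _ ≤ PR + Pmax := by
        simp only [hdu]
        gcongr
        exact hPR.2 ⟨k, hkn, hkΩ, rfl⟩
    _ ≤ 2 * Pmin := by
        rw [hPmin]
        linarith [le_max_left Pmax PR, le_max_right Pmax PR]

/-- Lemma 4 (bounds): with `γ_j ≤ 0`, `u_j ≤ Ω`, and items in non-increasing
profit-density order, the greedy/trivial lower bound `P_min` satisfies
`P_min ≤ P* ≤ 2·P_min`. -/
theorem stmt_13 (n : ℕ) (hn : 1 ≤ n) (γ β u : Fin n → ℝ)
    (hβ : ∀ j, 0 < β j) (hu : ∀ j, 0 < u j) (hpos : ∀ j, 0 < γ j + β j * u j)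
    (Ω : ℝ) (hΩ : 0 < Ω)
    (hγ : ∀ j, γ j ≤ 0) (huΩ : ∀ j, u j ≤ Ω)
    (hdens : ∀ i j : Fin n, i ≤ j →
      (γ j + β j * u j) / u j ≤ (γ i + β i * u i) / u i)
    (Pstar : ℝ)
    (hPstar : IsGreatest ((fun x : Fin n → ℝ => ∑ j, max (γ j + β j * x j) 0) ''
        {x | (∀ j, 0 ≤ x j ∧ x j ≤ u j) ∧ ∑ j, x j ≤ Ω}) Pstar)
    (PR : ℝ)
    (hPR : IsGreatest {v : ℝ | ∃ k ≤ n,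
        (∑ j ∈ Finset.univ.filter (fun j : Fin n => (j : ℕ) < k), u j ≤ Ω) ∧
        v = ∑ j ∈ Finset.univ.filter (fun j : Fin n => (j : ℕ) < k),
          (γ j + β j * u j)} PR)
    (Pmax : ℝ)
    (hPmax : IsGreatest {v : ℝ | ∃ j : Fin n, v = γ j + β j * u j} Pmax)
    (Pmin : ℝ) (hPmin : Pmin = max Pmax PR) :
    Pmin ≤ Pstar ∧ Pstar ≤ 2 * Pmin :=
  stmt_13_general n γ β u hu hpos Ω hΩ hγ huΩ hdens Pstar hPstar PR hPR Pmax hPmax Pmin hPmin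
end
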